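/- A pair of quadratic polynomials (α₀ + α₁x + α₂x²/2, β₀ + β₁x + β₂x²/2) with α₀ ≠ 0, β₀ ≠ 0 lies in the fat Bethe cell, i.e., equals (d₁b₁, d₂·Wr(b₁,b₂)) for some basis-type pair b₁ = 1+ax+bx²/2, b₂ = x+cx²/2 and nonzero scalars d₁,d₂, if and only if the Plücker relation α₁β₁ = α₀β₂ + α₂β₀ holds. -/

import Mathlib

/-!
Comparing coefficients, the pair lies in the cell exactly when `α = d₁ (1, a, b)` and
`β = d₂ (1, c, ac - b)`. Eliminating `a, b, c` gives the Plücker relation; conversely, since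
`α₀, β₀ ≠ 0`, the choice `d₁ = α₀`, `d₂ = β₀`, `a = α₁/α₀`, `b = α₂/α₀`, `c = β₁/β₀` works,
the relation being exactly the condition on the `x²`-coefficient of `β`.
-/

open Polynomial

noncomputable def Wr (f g : Polynomial ℂ) : Polynomial ℂ :=
  f * derivative g - derivative f * g

theorem Polynomial.quadratic_eq_quadratic_iff {R : Type*} [Semiring R] {p q r p' q' r' : R} :
    C p + C q * X + C r * X ^ 2 = C p' + C q' * X + C r' * X ^ 2 ↔
      p = p' ∧ q = q' ∧ r = r' := by
  refine ⟨fun h => ⟨?_, ?_, ?_⟩, fun ⟨hp, hq, hr⟩ => hp ▸ hq ▸ hr ▸ rfl⟩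
  · simpa [coeff_X_pow] using congrArg (coeff · 0) h
  · simpa [coeff_X_pow] using congrArg (coeff · 1) h
  · simpa [coeff_X_pow] using congrArg (coeff · 2) h

theorem Polynomial.C_mul_one_add_quadratic {R : Type*} [Semiring R] (d p q : R) :
    C d * (1 + C p * X + C q * X ^ 2) = C d + C (d * p) * X + C (d * q) * X ^ 2 := by
  simp only [C_mul, mul_add, mul_one, mul_assoc]

theorem Wr_one_add_quadratic_X_add_quadratic (a b c : ℂ) :
    Wr (1 + C a * X + C (b / 2) * X ^ 2) (X + C (c / 2) * X ^ 2) =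
      1 + C c * X + C ((a * c - b) / 2) * X ^ 2 := by
  have hc : (C c : ℂ[X]) = 2 * C (c / 2) := by
    rw [← C_ofNat, ← C_mul, mul_div_cancel₀ c two_ne_zero]
  have hacb : (C ((a * c - b) / 2) : ℂ[X]) = C a * C (c / 2) - C (b / 2) := by
    rw [← C_mul, ← C_sub, ← mul_div_assoc, sub_div]
  rw [Wr, hc, hacb]
  simp only [derivative_add, derivative_one, derivative_X, derivative_C_mul, derivative_X_pow,
    Nat.cast_ofNat, map_ofNat]
  ring

theorem fat_bethe_cell_iff (α₀ α₁ α₂ β₀ β₁ β₂ a b c d₁ d₂ : ℂ) :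
    (C α₀ + C α₁ * X + C (α₂ / 2) * X ^ 2 = C d₁ * (1 + C a * X + C (b / 2) * X ^ 2) ∧
      C β₀ + C β₁ * X + C (β₂ / 2) * X ^ 2 =
        C d₂ * Wr (1 + C a * X + C (b / 2) * X ^ 2) (X + C (c / 2) * X ^ 2)) ↔
      (α₀ = d₁ ∧ α₁ = d₁ * a ∧ α₂ = d₁ * b) ∧
        (β₀ = d₂ ∧ β₁ = d₂ * c ∧ β₂ = d₂ * (a * c - b)) := by
  rw [Wr_one_add_quadratic_X_add_quadratic, C_mul_one_add_quadratic, C_mul_one_add_quadratic,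
    quadratic_eq_quadratic_iff, quadratic_eq_quadratic_iff, mul_div_assoc', mul_div_assoc',
    div_left_inj' two_ne_zero, div_left_inj' two_ne_zero]

theorem stmt19 (α₀ α₁ α₂ β₀ β₁ β₂ : ℂ) (hα : α₀ ≠ 0) (hβ : β₀ ≠ 0) :
    (∃ a b c d₁ d₂ : ℂ, d₁ ≠ 0 ∧ d₂ ≠ 0 ∧
        C α₀ + C α₁ * X + C (α₂ / 2) * X ^ 2 =
          C d₁ * (1 + C a * X + C (b / 2) * X ^ 2) ∧
        C β₀ + C β₁ * X + C (β₂ / 2) * X ^ 2 =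
          C d₂ * Wr (1 + C a * X + C (b / 2) * X ^ 2) (X + C (c / 2) * X ^ 2)) ↔
      α₁ * β₁ = α₀ * β₂ + α₂ * β₀ := by
  simp only [fat_bethe_cell_iff]
  constructor
  · rintro ⟨a, b, c, d₁, d₂, -, -, ⟨rfl, rfl, rfl⟩, rfl, rfl, rfl⟩
    ring
  · intro hPlucker
    refine ⟨α₁ / α₀, α₂ / α₀, β₁ / β₀, α₀, β₀, hα, hβ, ⟨rfl, ?_, ?_⟩, rfl, ?_, ?_⟩
    · field_simp
    · field_simp
    · field_simp
    · field_simp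
      linear_combination -hPlucker
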